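/- arXiv:math/9504219 — 4 statements merged into one kernel-verified Lean document; each statement's English description precedes it below -/
import Mathlib

section
/- The q-binomial theorem: for |q| < 1 and |z| < 1, \sum_{n=0}^{\infty} ((a;q)_n/(q;q)_n) z^n = (az;q)_\infty/(z;q)_\infty. -/
open Filter Finset Topology

private lemma qb_one_sub_ne {x : ℂ} (h : ‖x‖ < 1) : 1 - x ≠ 0 := by
  intro h0
  have : x = 1 := by rwa [sub_eq_zero, eq_comm] at h0
  rw [this] at h; simp at h

private lemma qb_log_summable (w q : ℂ) (hq : ‖q‖ < 1) :
    Summable (fun n : ℕ => Complex.log (1 - w * q ^ n)) := by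
  obtain ⟨K, hK⟩ : ∃ K : ℕ, ∀ n ≥ K, ‖w * q ^ n‖ ≤ 1/2 := by
    have h0 : Filter.Tendsto (fun n : ℕ => w * q ^ n) atTop (𝓝 0) := by
      simpa using (tendsto_pow_atTop_nhds_zero_of_norm_lt_one hq).const_mul w
    have := ((show Filter.Tendsto (fun n : ℕ => ‖w * q ^ n‖) atTop (𝓝 0) by simpa using h0.norm).eventually_le_const (by norm_num : (0:ℝ) < 1/2))
    simpa using eventually_atTop.mp this
  rw [← summable_nat_add_iff K]
  apply Summable.of_norm_bounded (g := fun n => (3/2 * ‖w * q ^ K‖) * ‖q‖ ^ n)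
    (((summable_geometric_of_lt_one (norm_nonneg q) hq)).mul_left _)
  intro n
  have h1 : ‖w * q ^ (n + K)‖ ≤ 1/2 := hK _ (by omega)
  have h2 : ‖Complex.log (1 - w * q ^ (n + K))‖ ≤ 3/2 * ‖w * q ^ (n + K)‖ := by
    have := Complex.norm_log_one_add_half_le_self (z := -(w * q ^ (n + K))) (by simpa using h1)
    simpa [sub_eq_add_neg] using this
  refine h2.trans ?_
  have : ‖w * q ^ (n + K)‖ = ‖w * q ^ K‖ * ‖q‖ ^ n := by
    rw [pow_add]; simp [norm_mul, norm_pow]; ring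
  rw [this]; ring_nf; rfl

private lemma qb_multipliable (w q : ℂ) (hq : ‖q‖ < 1) :
    Multipliable (fun k : ℕ => 1 - w * q ^ k) := by
  by_cases h : ∀ k : ℕ, 1 - w * q ^ k ≠ 0
  · exact Complex.multipliable_of_summable_log (qb_log_summable w q hq)
  · push_neg at h
    obtain ⟨k0, hk0⟩ := h
    refine ⟨0, ?_⟩
    have hev : ∀ᶠ s : Finset ℕ in atTop, (0:ℂ) = ∏ k ∈ s, (1 - w * q ^ k) := by
      filter_upwards [eventually_ge_atTop ({k0} : Finset ℕ)] with s hs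
      exact (Finset.prod_eq_zero (hs (Finset.mem_singleton_self k0)) hk0).symm
    exact Tendsto.congr' hev tendsto_const_nhds

private lemma qb_tprod_ne_zero (w q : ℂ) (hq : ‖q‖ < 1) (h : ∀ k : ℕ, 1 - w * q ^ k ≠ 0) :
    (∏' k : ℕ, (1 - w * q ^ k)) ≠ 0 := by
  have h0 := Complex.cexp_tsum_eq_tprod (f := fun k => 1 - w * q ^ k)
    (fun k => h k) (qb_log_summable w q hq)
  rw [← h0]
  exact Complex.exp_ne_zero _


private noncomputable def qbc (q a : ℂ) (n : ℕ) : ℂ :=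
  (∏ k ∈ Finset.range n, (1 - a * q ^ k)) / (∏ k ∈ Finset.range n, (1 - q ^ (k + 1)))

private lemma qb_fac_ne (q : ℂ) (hq : ‖q‖ < 1) (k : ℕ) : 1 - q ^ (k + 1) ≠ 0 := by
  apply qb_one_sub_ne
  rw [norm_pow]
  exact pow_lt_one₀ (norm_nonneg q) hq (Nat.succ_ne_zero k)

private lemma qb_den_ne (q : ℂ) (hq : ‖q‖ < 1) (n : ℕ) :
    (∏ k ∈ Finset.range n, (1 - q ^ (k + 1))) ≠ 0 :=
  Finset.prod_ne_zero_iff.mpr fun k _ => qb_fac_ne q hq k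

private lemma qbc_rec (q a : ℂ) (hq : ‖q‖ < 1) (n : ℕ) :
    qbc q a (n + 1) * (1 - q ^ (n + 1)) = qbc q a n * (1 - a * q ^ n) := by
  unfold qbc
  rw [Finset.prod_range_succ, Finset.prod_range_succ]
  have h1 := qb_den_ne q hq n
  have h2 := qb_fac_ne q hq n
  field_simp

private lemma qbc_bound (q a : ℂ) (hq : ‖q‖ < 1) :
    ∃ C : ℝ, 0 < C ∧ ∀ n, ‖qbc q a n‖ ≤ C := by
  have hq0 : (0:ℝ) < 1 - ‖q‖ := by linarith
  set T : ℝ := ‖a‖ / (1 - ‖q‖) + ‖q‖ / ((1 - ‖q‖) * (1 - ‖q‖)) with hT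
  refine ⟨Real.exp T, Real.exp_pos T, fun n => ?_⟩
  have key : ∀ k : ℕ, ‖(1 - a * q ^ k) / (1 - q ^ (k + 1))‖ ≤
      Real.exp (‖a‖ * ‖q‖ ^ k + ‖q‖ ^ (k + 1) / (1 - ‖q‖)) := by
    intro k
    rw [norm_div, Real.exp_add]
    have hx : ‖q ^ (k+1)‖ < 1 := by
      rw [norm_pow]; exact pow_lt_one₀ (norm_nonneg q) hq (Nat.succ_ne_zero k)
    have hd0 : (0:ℝ) < 1 - ‖q ^ (k+1)‖ := by linarith
    apply mul_le_mul
    · calc ‖1 - a * q ^ k‖ ≤ ‖(1:ℂ)‖ + ‖a * q ^ k‖ := norm_sub_le _ _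
        _ = 1 + ‖a‖ * ‖q‖ ^ k := by simp [norm_mul, norm_pow]
        _ ≤ Real.exp (‖a‖ * ‖q‖ ^ k) := by
            have := Real.add_one_le_exp (‖a‖ * ‖q‖ ^ k); linarith
    · have hlow : 1 - ‖q ^ (k+1)‖ ≤ ‖1 - q ^ (k + 1)‖ := by
        calc 1 - ‖q ^ (k+1)‖ = ‖(1:ℂ)‖ - ‖q ^ (k+1)‖ := by simp
          _ ≤ ‖1 - q ^ (k + 1)‖ := norm_sub_norm_le _ _
      have h1 : ‖1 - q ^ (k + 1)‖⁻¹ ≤ (1 - ‖q ^ (k+1)‖)⁻¹ := by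
        apply inv_anti₀ hd0 hlow
      refine h1.trans ?_
      -- (1 - x)⁻¹ ≤ exp (x / (1 - ‖q‖)) with x = ‖q^(k+1)‖ ≤ ‖q‖
      have hxq : ‖q ^ (k+1)‖ ≤ ‖q‖ := by
        rw [norm_pow]
        calc ‖q‖ ^ (k+1) ≤ ‖q‖ ^ 1 := pow_le_pow_of_le_one (norm_nonneg q) hq.le (by omega)
          _ = ‖q‖ := pow_one _
      have hxnn : (0:ℝ) ≤ ‖q ^ (k+1)‖ := norm_nonneg _
      have step : (1 - ‖q ^ (k+1)‖)⁻¹ ≤ 1 + ‖q ^ (k+1)‖ / (1 - ‖q‖) := by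
        rw [inv_le_iff_one_le_mul₀ hd0]
        have expand : (1 + ‖q ^ (k+1)‖ / (1 - ‖q‖)) * (1 - ‖q ^ (k+1)‖)
            = 1 - ‖q ^ (k+1)‖ + ‖q ^ (k+1)‖ / (1 - ‖q‖) * (1 - ‖q ^ (k+1)‖) := by ring
        rw [expand]
        have : ‖q ^ (k+1)‖ ≤ ‖q ^ (k+1)‖ / (1 - ‖q‖) * (1 - ‖q ^ (k+1)‖) := by
          rw [div_mul_eq_mul_div, le_div_iff₀ hq0]
          apply mul_le_mul_of_nonneg_left _ hxnn
          linarith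
        linarith
      refine step.trans ?_
      have := Real.add_one_le_exp (‖q ^ (k+1)‖ / (1 - ‖q‖))
      have heq : ‖q ^ (k+1)‖ = ‖q‖ ^ (k+1) := norm_pow q (k+1)
      rw [heq] at this ⊢
      linarith
    · positivity
    · positivity
  have hrw : qbc q a n = ∏ k ∈ Finset.range n, (1 - a * q ^ k) / (1 - q ^ (k + 1)) := by
    rw [qbc, Finset.prod_div_distrib]
  rw [hrw]
  calc ‖∏ k ∈ Finset.range n, (1 - a * q ^ k) / (1 - q ^ (k + 1))‖
      = ∏ k ∈ Finset.range n, ‖(1 - a * q ^ k) / (1 - q ^ (k + 1))‖ := norm_prod _ _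
    _ ≤ ∏ k ∈ Finset.range n, Real.exp (‖a‖ * ‖q‖ ^ k + ‖q‖ ^ (k + 1) / (1 - ‖q‖)) := by
        apply Finset.prod_le_prod (fun k _ => norm_nonneg _) (fun k _ => key k)
    _ = Real.exp (∑ k ∈ Finset.range n, (‖a‖ * ‖q‖ ^ k + ‖q‖ ^ (k + 1) / (1 - ‖q‖))) :=
        (Real.exp_sum _ _).symm
    _ ≤ Real.exp T := by
        apply Real.exp_le_exp.mpr
        rw [Finset.sum_add_distrib, hT]
        have hgeom : ∀ m : ℕ, ∑ k ∈ Finset.range m, ‖q‖ ^ k ≤ (1 - ‖q‖)⁻¹ := by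
          intro m
          refine (Summable.sum_le_tsum (Finset.range m) (fun k _ => by positivity)
            (summable_geometric_of_lt_one (norm_nonneg q) hq)).trans ?_
          rw [tsum_geometric_of_lt_one (norm_nonneg q) hq]
        have h1 : ∑ k ∈ Finset.range n, ‖a‖ * ‖q‖ ^ k ≤ ‖a‖ / (1 - ‖q‖) := by
          rw [← Finset.mul_sum, div_eq_mul_inv]
          exact mul_le_mul_of_nonneg_left (hgeom n) (norm_nonneg a)
        have h2 : ∑ k ∈ Finset.range n, ‖q‖ ^ (k + 1) / (1 - ‖q‖)
            ≤ ‖q‖ / ((1 - ‖q‖) * (1 - ‖q‖)) := by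
          have : ∀ k : ℕ, ‖q‖ ^ (k + 1) / (1 - ‖q‖) = (‖q‖ / (1 - ‖q‖)) * ‖q‖ ^ k := by
            intro k; rw [pow_succ]; ring
          simp_rw [this]
          rw [← Finset.mul_sum]
          have := mul_le_mul_of_nonneg_left (hgeom n) (by positivity : (0:ℝ) ≤ ‖q‖ / (1 - ‖q‖))
          refine this.trans (le_of_eq ?_)
          field_simp
        linarith
private lemma qb_summable_aux (d : ℕ → ℂ) (w : ℂ) (hw : ‖w‖ < 1) (B : ℝ)
    (hB : ∀ n, ‖d n‖ ≤ B) : Summable (fun n => d n * w ^ n) := by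
  apply Summable.of_norm_bounded (g := fun n => B * ‖w‖ ^ n)
    ((summable_geometric_of_lt_one (norm_nonneg w) hw).mul_left B)
  intro n
  rw [norm_mul, norm_pow]
  exact mul_le_mul_of_nonneg_right (hB n) (by positivity)

private noncomputable def qbF (q a w : ℂ) : ℂ := ∑' n : ℕ, qbc q a n * w ^ n

private lemma qb_funEq (q a : ℂ) (hq : ‖q‖ < 1) (w : ℂ) (hw : ‖w‖ < 1) :
    (1 - w) * qbF q a w = (1 - a * w) * qbF q a (q * w) := by
  obtain ⟨C, hC0, hC⟩ := qbc_bound q a hq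
  have hqw : ‖q * w‖ < 1 := by
    rw [norm_mul]
    calc ‖q‖ * ‖w‖ ≤ 1 * ‖w‖ := mul_le_mul_of_nonneg_right hq.le (norm_nonneg w)
      _ = ‖w‖ := one_mul _
      _ < 1 := hw
  set u : ℕ → ℂ := fun n => qbc q a n * (1 - q ^ n) * w ^ n with hu
  have hUd : ∀ n, ‖qbc q a n * (1 - q ^ n)‖ ≤ C * 2 := by
    intro n
    rw [norm_mul]
    have h1 : ‖(1:ℂ) - q ^ n‖ ≤ 2 := by
      calc ‖(1:ℂ) - q ^ n‖ ≤ ‖(1:ℂ)‖ + ‖q ^ n‖ := norm_sub_le _ _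
        _ ≤ 1 + 1 := by
            rw [norm_one, norm_pow]
            have := pow_le_one₀ (norm_nonneg q) hq.le (n := n)
            linarith
        _ = 2 := by norm_num
    exact mul_le_mul (hC n) h1 (norm_nonneg _) hC0.le
  have hU : Summable u := qb_summable_aux _ w hw (C * 2) hUd
  have hUs : Summable (fun n => u (n + 1)) := (summable_nat_add_iff 1).mpr hU
  have S1 : Summable (fun n => qbc q a n * w ^ n) := qb_summable_aux _ w hw C hC
  have S2 : Summable (fun n => qbc q a n * (q * w) ^ n) := qb_summable_aux _ _ hqw C hC
  have hterm : ∀ n : ℕ, qbc q a n * w ^ n - qbc q a n * w ^ n * w =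
      (qbc q a n * (q * w) ^ n - qbc q a n * (q * w) ^ n * (a * w)) + (u n - u (n + 1)) := by
    intro n
    have hrec := qbc_rec q a hq n
    have hu1 : u (n + 1) = qbc q a n * (1 - a * q ^ n) * w ^ (n + 1) := by
      rw [hu]
      simp only []
      rw [← hrec]
    rw [hu1, hu]
    simp only []
    ring
  have hL : (1 - w) * qbF q a w = ∑' n, (qbc q a n * w ^ n - qbc q a n * w ^ n * w) := by
    rw [Summable.tsum_sub S1 (S1.mul_right w), sub_mul, one_mul, qbF, tsum_mul_right]
    ring
  have hR : (1 - a * w) * qbF q a (q * w) =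
      ∑' n, (qbc q a n * (q * w) ^ n - qbc q a n * (q * w) ^ n * (a * w)) := by
    rw [Summable.tsum_sub S2 (S2.mul_right (a * w)), sub_mul, one_mul, qbF, tsum_mul_right]
    ring
  rw [hL, hR]
  have hcongr : ∑' n, (qbc q a n * w ^ n - qbc q a n * w ^ n * w) =
      ∑' n, ((qbc q a n * (q * w) ^ n - qbc q a n * (q * w) ^ n * (a * w)) + (u n - u (n + 1))) :=
    tsum_congr hterm
  rw [hcongr, Summable.tsum_add (S2.sub (S2.mul_right (a * w))) (hU.sub hUs),
    Summable.tsum_sub hU hUs]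
  have hshift : ∑' n, u (n + 1) = ∑' n, u n - u 0 := by
    have := Summable.tsum_eq_zero_add hU
    rw [this]; ring
  rw [hshift]
  have hu0 : u 0 = 0 := by rw [hu]; simp
  rw [hu0]; ring
set_option maxHeartbeats 1000000 in
/-- The q-binomial theorem: for `‖q‖ < 1`, `‖z‖ < 1`,
`∑ ((a;q)ₙ/(q;q)ₙ) zⁿ = (az;q)_∞/(z;q)_∞`. -/
theorem q_binomial_theorem (q a z : ℂ) (hq : ‖q‖ < 1) (hz : ‖z‖ < 1) :
    ∑' n : ℕ, (∏ k ∈ Finset.range n, (1 - a * q ^ k)) /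
        (∏ k ∈ Finset.range n, (1 - q ^ (k + 1))) * z ^ n =
      (∏' k : ℕ, (1 - a * z * q ^ k)) / ∏' k : ℕ, (1 - z * q ^ k) := by
  obtain ⟨C, hC0, hC⟩ := qbc_bound q a hq
  have hzq : ∀ N : ℕ, ‖q ^ N * z‖ < 1 := by
    intro N
    rw [norm_mul, norm_pow]
    calc ‖q‖ ^ N * ‖z‖ ≤ 1 * ‖z‖ :=
        mul_le_mul_of_nonneg_right (pow_le_one₀ (norm_nonneg q) hq.le) (norm_nonneg z)
      _ = ‖z‖ := one_mul _
      _ < 1 := hz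
  have hzqk : ∀ k : ℕ, 1 - z * q ^ k ≠ 0 := by
    intro k
    apply qb_one_sub_ne
    have := hzq k
    rwa [mul_comm] at this
  -- iteration
  have hiter : ∀ N : ℕ, qbF q a z =
      (∏ k ∈ Finset.range N, (1 - a * z * q ^ k)) / (∏ k ∈ Finset.range N, (1 - z * q ^ k))
        * qbF q a (q ^ N * z) := by
    intro N
    induction N with
    | zero => simp
    | succ N ih =>
      have hfe := qb_funEq q a hq (q ^ N * z) (hzq N)
      have hne : (1 : ℂ) - q ^ N * z ≠ 0 := qb_one_sub_ne (hzq N)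
      have h2 : q * (q ^ N * z) = q ^ (N + 1) * z := by ring
      have hstep : qbF q a (q ^ N * z) =
          (1 - a * z * q ^ N) / (1 - z * q ^ N) * qbF q a (q ^ (N + 1) * z) := by
        rw [div_mul_eq_mul_div, eq_div_iff (hzqk N)]
        calc qbF q a (q ^ N * z) * (1 - z * q ^ N)
            = (1 - q ^ N * z) * qbF q a (q ^ N * z) := by ring
          _ = (1 - a * (q ^ N * z)) * qbF q a (q * (q ^ N * z)) := hfe
          _ = (1 - a * z * q ^ N) * qbF q a (q ^ (N + 1) * z) := by rw [h2]; ring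
      rw [ih, hstep, Finset.prod_range_succ, Finset.prod_range_succ, ← mul_assoc,
        div_mul_div_comm]
  -- limits
  have hmulN := (qb_multipliable (a * z) q hq).hasProd.tendsto_prod_nat
  have hmulD := (qb_multipliable z q hq).hasProd.tendsto_prod_nat
  have hQne : (∏' k : ℕ, (1 - z * q ^ k)) ≠ 0 := qb_tprod_ne_zero z q hq hzqk
  -- F(q^N z) → 1
  have hF1 : Filter.Tendsto (fun N : ℕ => qbF q a (q ^ N * z)) atTop (𝓝 1) := by
    have hbound : ∀ N : ℕ, ‖qbF q a (q ^ N * z) - 1‖ ≤ (C * ‖z‖ / (1 - ‖z‖)) * ‖q‖ ^ N := by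
      intro N
      set w : ℂ := q ^ N * z with hw
      have hwz : ‖w‖ = ‖q‖ ^ N * ‖z‖ := by rw [hw, norm_mul, norm_pow]
      have hw1 : ‖w‖ < 1 := hzq N
      have hS : Summable (fun n => qbc q a n * w ^ n) := qb_summable_aux _ w hw1 C hC
      have hS1 : Summable (fun n => qbc q a (n + 1) * w ^ (n + 1)) :=
        (summable_nat_add_iff 1).mpr hS
      have hsplit : qbF q a w - 1 = ∑' n, qbc q a (n + 1) * w ^ (n + 1) := by
        rw [qbF, Summable.tsum_eq_zero_add hS]
        have : qbc q a 0 = 1 := by simp [qbc]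
        rw [this]; simp
      rw [hsplit]
      have hterm : ∀ n : ℕ, ‖qbc q a (n + 1) * w ^ (n + 1)‖ ≤
          (C * (‖q‖ ^ N * ‖z‖)) * ‖z‖ ^ n := by
        intro n
        rw [norm_mul, norm_pow, hwz]
        calc ‖qbc q a (n+1)‖ * (‖q‖ ^ N * ‖z‖) ^ (n + 1)
            ≤ C * (‖q‖ ^ N * ‖z‖) ^ (n + 1) :=
              mul_le_mul_of_nonneg_right (hC _) (by positivity)
          _ = C * (‖q‖ ^ N * ‖z‖) * (‖q‖ ^ N * ‖z‖) ^ n := by rw [pow_succ]; ring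
          _ ≤ C * (‖q‖ ^ N * ‖z‖) * ‖z‖ ^ n := by
              apply mul_le_mul_of_nonneg_left _ (by positivity)
              apply pow_le_pow_left₀ (by positivity)
              calc ‖q‖ ^ N * ‖z‖ ≤ 1 * ‖z‖ :=
                  mul_le_mul_of_nonneg_right (pow_le_one₀ (norm_nonneg q) hq.le) (norm_nonneg z)
                _ = ‖z‖ := one_mul _
      have hmaj : Summable (fun n : ℕ => (C * (‖q‖ ^ N * ‖z‖)) * ‖z‖ ^ n) :=
        (summable_geometric_of_lt_one (norm_nonneg z) hz).mul_left _
      calc ‖∑' n, qbc q a (n + 1) * w ^ (n + 1)‖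
          ≤ ∑' n, ‖qbc q a (n + 1) * w ^ (n + 1)‖ :=
            norm_tsum_le_tsum_norm (hS1.norm)
        _ ≤ ∑' n : ℕ, (C * (‖q‖ ^ N * ‖z‖)) * ‖z‖ ^ n :=
            Summable.tsum_le_tsum hterm hS1.norm hmaj
        _ = (C * (‖q‖ ^ N * ‖z‖)) * (1 - ‖z‖)⁻¹ := by
            rw [tsum_mul_left, tsum_geometric_of_lt_one (norm_nonneg z) hz]
        _ = (C * ‖z‖ / (1 - ‖z‖)) * ‖q‖ ^ N := by ring
    have hg : Filter.Tendsto (fun N : ℕ => (C * ‖z‖ / (1 - ‖z‖)) * ‖q‖ ^ N) atTop (𝓝 0) := by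
      simpa using (tendsto_pow_atTop_nhds_zero_of_lt_one (norm_nonneg q) hq).const_mul
        (C * ‖z‖ / (1 - ‖z‖))
    have h0 : Filter.Tendsto (fun N : ℕ => qbF q a (q ^ N * z) - 1) atTop (𝓝 0) :=
      squeeze_zero_norm hbound hg
    have := h0.add_const 1
    simpa using this
  -- combine
  have hcomb : Filter.Tendsto (fun N : ℕ =>
      (∏ k ∈ Finset.range N, (1 - a * z * q ^ k)) / (∏ k ∈ Finset.range N, (1 - z * q ^ k))
        * qbF q a (q ^ N * z)) atTop
      (𝓝 ((∏' k : ℕ, (1 - a * z * q ^ k)) / (∏' k : ℕ, (1 - z * q ^ k)) * 1)) :=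
    ((hmulN.div hmulD hQne).mul hF1)
  have hconst : Filter.Tendsto (fun _ : ℕ => qbF q a z) atTop (𝓝 (qbF q a z)) :=
    tendsto_const_nhds
  have := tendsto_nhds_unique (hconst.congr (fun N => hiter N)) hcomb
  rw [mul_one] at this
  unfold qbF qbc at this
  exact this
end

section
/- As the integer order \nu \to \infty, J_\nu^{(2)}(z;q) \sim (z/2)^\nu/(q;q)_\infty; that is, (2/z)^\nu J_\nu^{(2)}(z;q) converges to 1/(q;q)_\infty. -/
open Filter

/-- The q-Bessel function `J_ν^{(2)}(z;q)`. -/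
noncomputable def qBessel2 (q z : ℂ) (ν : ℕ) : ℂ :=
  ∑' n : ℕ, q ^ (n * (n + ν)) * (-1) ^ n /
      ((∏ k ∈ Finset.range n, (1 - q ^ (k + 1))) *
        ∏ k ∈ Finset.range (n + ν), (1 - q ^ (k + 1))) * (z / 2) ^ (2 * n + ν)

/-- As the integer order `ν → ∞`, `(2/z)^ν J_ν^{(2)}(z;q) → 1/(q;q)_∞`,
i.e. `J_ν^{(2)}(z;q) ∼ (z/2)^ν/(q;q)_∞`. -/
theorem qBessel2_asymptotic (q : ℝ) (hq0 : 0 < q) (hq1 : q < 1) (z : ℂ) (hz : z ≠ 0) :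
    Tendsto (fun ν : ℕ => (2 / z) ^ ν * qBessel2 (q : ℂ) z ν) atTop
      (nhds ((∏' k : ℕ, (1 - (q : ℂ) ^ (k + 1)))⁻¹)) := by

  have hqk : ∀ k : ℕ, 0 < 1 - q ^ (k + 1) := fun k => by
    have : q ^ (k + 1) < 1 := pow_lt_one₀ hq0.le hq1 (Nat.succ_ne_zero k)
    linarith
  set P : ℕ → ℝ := fun m => ∏ k ∈ Finset.range m, (1 - q ^ (k + 1)) with hPdef
  have hPpos : ∀ m, 0 < P m := fun m => Finset.prod_pos fun k _ => hqk k
  -- summability of logs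
  have hlogsum : Summable fun n : ℕ => Real.log (1 - q ^ (n + 1)) := by
    apply Summable.of_norm
    have hg : Summable fun n : ℕ => q * q ^ n * (1 - q)⁻¹ :=
      ((summable_geometric_of_lt_one hq0.le hq1).mul_left q).mul_right _
    refine hg.of_nonneg_of_le (fun n => norm_nonneg _) (fun n => ?_)
    have hx1 : q ^ (n + 1) ≤ q := pow_le_of_le_one hq0.le hq1.le (Nat.succ_ne_zero n)
    have hxpos : 0 < q ^ (n + 1) := pow_pos hq0 _
    have hlogle : Real.log (1 - q ^ (n + 1)) ≤ 0 :=
      Real.log_nonpos (by linarith) (by linarith)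
    rw [Real.norm_eq_abs, abs_of_nonpos hlogle]
    have h1 : -Real.log (1 - q ^ (n + 1)) = Real.log (1 - q ^ (n + 1))⁻¹ :=
      (Real.log_inv _).symm
    rw [h1]
    have h2 := Real.log_le_sub_one_of_pos (inv_pos.mpr (hqk n))
    have h3 : (1 - q ^ (n + 1))⁻¹ - 1 = q ^ (n + 1) / (1 - q ^ (n + 1)) := by
      rw [inv_eq_one_div, div_sub_one (by linarith [hqk n] : (1:ℝ) - q ^ (n+1) ≠ 0)]
      ring_nf
    have h4 : q ^ (n + 1) / (1 - q ^ (n + 1)) ≤ q ^ (n + 1) / (1 - q) := by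
      gcongr
    calc Real.log (1 - q ^ (n + 1))⁻¹ ≤ (1 - q ^ (n + 1))⁻¹ - 1 := h2
      _ = q ^ (n + 1) / (1 - q ^ (n + 1)) := h3
      _ ≤ q ^ (n + 1) / (1 - q) := h4
      _ = q * q ^ n * (1 - q)⁻¹ := by rw [pow_succ']; ring
  -- real infinite product
  have hprodR : HasProd (fun n : ℕ => 1 - q ^ (n + 1)) (∏' n : ℕ, (1 - q ^ (n + 1))) :=
    (Real.multipliable_of_summable_log hqk hlogsum).hasProd
  set L : ℝ := ∏' n : ℕ, (1 - q ^ (n + 1)) with hLdef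
  have hLexp : Real.exp (∑' n : ℕ, Real.log (1 - q ^ (n + 1))) = L :=
    Real.rexp_tsum_eq_tprod (f := fun n : ℕ => 1 - q ^ (n + 1)) hqk hlogsum
  have hLpos : 0 < L := hLexp ▸ Real.exp_pos _
  have hPtend : Tendsto P atTop (nhds L) := hprodR.tendsto_prod_nat
  have hPge : ∀ m, L ≤ P m := by
    intro m
    refine le_of_tendsto hPtend ?_
    filter_upwards [eventually_ge_atTop m] with k hk
    have hsplit := Finset.prod_range_mul_prod_Ico (fun i => 1 - q ^ (i + 1)) hk
    have hico : (∏ i ∈ Finset.Ico m k, (1 - q ^ (i + 1))) ≤ 1 :=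
      Finset.prod_le_one (fun i _ => (hqk i).le)
        (fun i _ => by nlinarith [pow_pos hq0 (i + 1)])
    have hico0 : (0:ℝ) ≤ ∏ i ∈ Finset.Ico m k, (1 - q ^ (i + 1)) :=
      Finset.prod_nonneg fun i _ => (hqk i).le
    calc P k = P m * ∏ i ∈ Finset.Ico m k, (1 - q ^ (i + 1)) := by
          rw [hPdef]; exact hsplit.symm
      _ ≤ P m * 1 := mul_le_mul_of_nonneg_left hico (hPpos m).le
      _ = P m := mul_one _
  have hL1 : L ≤ 1 := by simpa [hPdef] using hPge 0
  -- complex side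
  have hPc : ∀ m : ℕ, (∏ k ∈ Finset.range m, (1 - (q : ℂ) ^ (k + 1))) = ((P m : ℝ) : ℂ) := by
    intro m
    rw [hPdef]
    push_cast
    rfl
  have hprodC : HasProd (fun n : ℕ => 1 - (q : ℂ) ^ (n + 1)) ((L : ℝ) : ℂ) := by
    have h := hprodR.map Complex.ofRealHom Complex.continuous_ofReal
    have h2 : (⇑Complex.ofRealHom ∘ fun n : ℕ => 1 - q ^ (n + 1)) =
        fun n : ℕ => 1 - (q : ℂ) ^ (n + 1) := by
      funext n; simp [Complex.ofRealHom_eq_coe]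
    rwa [h2] at h
  set Lc : ℂ := ∏' k : ℕ, (1 - (q : ℂ) ^ (k + 1)) with hLcdef
  have hLcEq : Lc = (L : ℂ) := hprodC.tprod_eq
  have hLcne : Lc ≠ 0 := by
    rw [hLcEq]
    exact_mod_cast hLpos.ne'
  have hPcTend : Tendsto (fun m : ℕ => ∏ k ∈ Finset.range m, (1 - (q : ℂ) ^ (k + 1)))
      atTop (nhds Lc) := by
    rw [hLcEq]
    exact hprodC.tendsto_prod_nat
  -- The rescaled summand
  set f : ℕ → ℕ → ℂ := fun ν n => (q : ℂ) ^ (n * (n + ν)) * (-1) ^ n /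
      ((∏ k ∈ Finset.range n, (1 - (q : ℂ) ^ (k + 1))) *
        ∏ k ∈ Finset.range (n + ν), (1 - (q : ℂ) ^ (k + 1))) * (z / 2) ^ (2 * n) with hfdef
  set r : ℝ := ‖z / 2‖ with hrdef
  have hr0 : 0 ≤ r := norm_nonneg _
  have hnorm : ∀ ν n : ℕ, ‖f ν n‖ = q ^ (n * (n + ν)) / (P n * P (n + ν)) * r ^ (2 * n) := by
    intro ν n
    rw [hfdef]
    simp only
    rw [hPc n, hPc (n + ν)]
    rw [norm_mul, norm_div, norm_mul, norm_mul, norm_pow, norm_pow, norm_pow,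
      Complex.norm_real, Complex.norm_real, Complex.norm_real, norm_neg, norm_one, one_pow,
      mul_one, Real.norm_eq_abs, Real.norm_eq_abs, Real.norm_eq_abs,
      abs_of_pos hq0, abs_of_pos (hPpos n), abs_of_pos (hPpos (n + ν))]
  -- key rewriting
  have key : ∀ ν : ℕ, (2 / z) ^ ν * qBessel2 (q : ℂ) z ν = ∑' n : ℕ, f ν n := by
    intro ν
    rw [qBessel2, ← tsum_mul_left]
    refine tsum_congr fun n => ?_
    have h2z : (2 / z) ^ ν * (z / 2) ^ ν = 1 := by
      rw [← mul_pow]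
      field_simp
      exact one_pow ν
    rw [hfdef]
    simp only
    rw [pow_add]
    calc (2 / z) ^ ν * ((q:ℂ) ^ (n * (n + ν)) * (-1) ^ n /
          ((∏ k ∈ Finset.range n, (1 - (q:ℂ) ^ (k + 1))) *
            ∏ k ∈ Finset.range (n + ν), (1 - (q:ℂ) ^ (k + 1))) *
          ((z / 2) ^ (2 * n) * (z / 2) ^ ν))
        = (q:ℂ) ^ (n * (n + ν)) * (-1) ^ n /
          ((∏ k ∈ Finset.range n, (1 - (q:ℂ) ^ (k + 1))) *
            ∏ k ∈ Finset.range (n + ν), (1 - (q:ℂ) ^ (k + 1))) * (z / 2) ^ (2 * n) *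
          ((2 / z) ^ ν * (z / 2) ^ ν) := by ring
      _ = _ := by rw [h2z, mul_one]
  -- limit function
  set g : ℕ → ℂ := fun n => if n = 0 then Lc⁻¹ else 0 with hgdef
  -- choose N
  obtain ⟨N, hN⟩ : ∃ N : ℕ, q ^ N < (r ^ 2 + 1)⁻¹ := by
    have := tendsto_pow_atTop_nhds_zero_of_lt_one hq0.le hq1
    have h := (this.eventually_lt_const (by positivity : (0:ℝ) < (r ^ 2 + 1)⁻¹)).exists
    exact h
  set t : ℝ := q ^ N * r ^ 2 with htdef
  have ht0 : 0 ≤ t := by positivity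
  have ht1 : t < 1 := by
    have h1 : (0:ℝ) < r ^ 2 + 1 := by positivity
    have h2 : q ^ N * r ^ 2 < (r ^ 2 + 1)⁻¹ * (r ^ 2 + 1) := by
      rcases eq_or_lt_of_le (sq_nonneg r) with h | h
      · rw [← h]; simpa using by positivity
      · calc q ^ N * r ^ 2 < (r ^ 2 + 1)⁻¹ * r ^ 2 := by
              exact mul_lt_mul_of_pos_right hN h
          _ < (r ^ 2 + 1)⁻¹ * (r ^ 2 + 1) := by
              have : (0:ℝ) < (r ^ 2 + 1)⁻¹ := by positivity
              nlinarith
    rwa [inv_mul_cancel₀ h1.ne'] at h2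
  set bound : ℕ → ℝ := fun n => t ^ n / L ^ 2 with hbdef
  have hbsum : Summable bound := (summable_geometric_of_lt_one ht0 ht1).div_const _
  -- pointwise limits
  have hlim : ∀ n : ℕ, Tendsto (fun ν => f ν n) atTop (nhds (g n)) := by
    intro n
    match n with
    | 0 =>
      have : (fun ν : ℕ => f ν 0) =
          fun ν : ℕ => (∏ k ∈ Finset.range ν, (1 - (q : ℂ) ^ (k + 1)))⁻¹ := by
        funext ν
        rw [hfdef]
        simp [one_div]
      rw [this, hgdef]
      simpa using hPcTend.inv₀ hLcne
    | (m + 1) =>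
      have hgm : g (m + 1) = 0 := by rw [hgdef]; simp
      rw [hgm]
      apply squeeze_zero_norm (a := fun ν : ℕ => r ^ (2 * (m+1)) / L ^ 2 * (q ^ (m+1)) ^ ν)
      · intro ν
        rw [hnorm ν (m+1)]
        have h1 : q ^ ((m+1) * ((m+1) + ν)) ≤ (q ^ (m+1)) ^ ν := by
          rw [← pow_mul]
          apply pow_le_pow_of_le_one hq0.le hq1.le
          exact Nat.mul_le_mul_left _ (Nat.le_add_left ν (m+1))
        have h2 : L ^ 2 ≤ P (m+1) * P ((m+1) + ν) := by
          have := hPge (m+1); have := hPge ((m+1) + ν)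
          nlinarith
        calc q ^ ((m+1) * ((m+1) + ν)) / (P (m+1) * P ((m+1) + ν)) * r ^ (2 * (m+1))
            ≤ (q ^ (m+1)) ^ ν / L ^ 2 * r ^ (2 * (m+1)) := by
              apply mul_le_mul_of_nonneg_right _ (by positivity)
              exact div_le_div₀ (by positivity) h1 (by positivity) h2
          _ = r ^ (2 * (m+1)) / L ^ 2 * (q ^ (m+1)) ^ ν := by ring
      · have hq' : q ^ (m+1) < 1 := pow_lt_one₀ hq0.le hq1 (Nat.succ_ne_zero m)
        have := (tendsto_pow_atTop_nhds_zero_of_lt_one (by positivity) hq').const_mul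
          (r ^ (2 * (m+1)) / L ^ 2)
        simpa using this
  -- uniform bound
  have hbound : ∀ᶠ ν in atTop, ∀ n, ‖f ν n‖ ≤ bound n := by
    filter_upwards [eventually_ge_atTop N] with ν hν n
    rw [hnorm ν n, hbdef]
    simp only
    have hexp : N * n ≤ n * (n + ν) := by
      calc N * n ≤ ν * n := Nat.mul_le_mul_right _ hν
        _ ≤ (n + ν) * n := Nat.mul_le_mul_right _ (Nat.le_add_left ν n)
        _ = n * (n + ν) := Nat.mul_comm _ _
    have h1 : q ^ (n * (n + ν)) ≤ q ^ (N * n) := pow_le_pow_of_le_one hq0.le hq1.le hexp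
    have h2 : L ^ 2 ≤ P n * P (n + ν) := by
      have := hPge n; have := hPge (n + ν)
      nlinarith
    have ht : t ^ n = q ^ (N * n) * r ^ (2 * n) := by
      rw [htdef, mul_pow, ← pow_mul, ← pow_mul, Nat.mul_comm 2 n]
    rw [ht]
    calc q ^ (n * (n + ν)) / (P n * P (n + ν)) * r ^ (2 * n)
        ≤ q ^ (N * n) / L ^ 2 * r ^ (2 * n) := by
          apply mul_le_mul_of_nonneg_right _ (by positivity)
          exact div_le_div₀ (by positivity) h1 (by positivity) h2
      _ = q ^ (N * n) * r ^ (2 * n) / L ^ 2 := by ring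
  -- conclude
  have main := tendsto_tsum_of_dominated_convergence hbsum hlim hbound
  have hgsum : ∑' n : ℕ, g n = Lc⁻¹ := by
    rw [tsum_eq_single 0 (fun b hb => by rw [hgdef]; simp [hb]), hgdef]
    simp
  rw [hgsum] at main
  exact main.congr fun ν => (key ν).symm
end

section
/- The continuous q-Hermite polynomials satisfy the raising relation \tau^* H_n = -q^{-(n+1)/2} H_{n+1}, where \tau^* = q^{-1/2}(z - z^{-1})^{-1}(z^{-2} T_z^{1/2} - z^2 T_z^{-1/2}). -/
open Finset Complex

/-- `(q;q)_n`. -/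
noncomputable def qp (q : ℂ) (n : ℕ) : ℂ := ∏ k ∈ range n, (1 - q ^ (k + 1))

/-- The continuous q-Hermite polynomial `H_n(x|q)` with `x = (z + z⁻¹)/2`
(for `z = e^{iθ}` this is `∑ₖ ((q;q)ₙ/((q;q)ₖ(q;q)_{n-k})) e^{i(n-2k)θ}`),
written as a symmetric Laurent polynomial in `z`. -/
noncomputable def Hq (q : ℂ) (n : ℕ) (z : ℂ) : ℂ :=
  ∑ k ∈ range (n + 1), qp q n / (qp q k * qp q (n - k)) * z ^ ((n : ℤ) - 2 * k)

lemma qp_succ (q : ℂ) (m : ℕ) : qp q (m + 1) = qp q m * (1 - q ^ (m + 1)) :=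
  Finset.prod_range_succ _ _

lemma qp_zero (q : ℂ) : qp q 0 = 1 := rfl

lemma qp_ne_zero {q : ℝ} (hq0 : 0 < q) (hq1 : q < 1) (m : ℕ) : qp (q : ℂ) m ≠ 0 := by
  unfold qp
  rw [Finset.prod_ne_zero_iff]
  intro k _
  have h1 : q ^ (k + 1) < 1 := pow_lt_one₀ hq0.le hq1 (Nat.succ_ne_zero k)
  have h2 : ((1 - q ^ (k + 1) : ℝ) : ℂ) ≠ 0 := by
    exact_mod_cast ne_of_gt (by linarith : (0:ℝ) < 1 - q ^ (k+1))
  simpa using h2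


lemma one_sub_pow_ne {q : ℝ} (hq0 : 0 < q) (hq1 : q < 1) (m : ℕ) :
    (1:ℂ) - (q:ℂ) ^ (m + 1) ≠ 0 := by
  have h1 : q ^ (m + 1) < 1 := pow_lt_one₀ hq0.le hq1 (Nat.succ_ne_zero m)
  have h2 : ((1 - q ^ (m + 1) : ℝ) : ℂ) ≠ 0 := by
    exact_mod_cast ne_of_gt (by linarith : (0:ℝ) < 1 - q ^ (m+1))
  simpa using h2

lemma pascalA {q : ℝ} (hq0 : 0 < q) (hq1 : q < 1) (j m : ℕ) :
    qp (q:ℂ) (j + 1 + m + 1) / (qp (q:ℂ) (j+1) * qp (q:ℂ) (m+1)) =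
      qp (q:ℂ) (j + 1 + m) / (qp (q:ℂ) (j+1) * qp (q:ℂ) m) +
      (q:ℂ) ^ (m+1) * (qp (q:ℂ) (j + 1 + m) / (qp (q:ℂ) j * qp (q:ℂ) (m+1))) := by
  have h1 := qp_ne_zero hq0 hq1
  rw [show j + 1 + m + 1 = (j + 1 + m) + 1 from rfl, qp_succ (q:ℂ) (j+1+m),
    qp_succ (q:ℂ) m, qp_succ (q:ℂ) j]
  have ha := one_sub_pow_ne hq0 hq1 j
  have hb := one_sub_pow_ne hq0 hq1 m
  field_simp [h1 j, h1 m, h1 (j+1+m)]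
  ring

lemma pascalB {q : ℝ} (hq0 : 0 < q) (hq1 : q < 1) (j m : ℕ) :
    qp (q:ℂ) (j + 1 + m + 1) / (qp (q:ℂ) (j+1) * qp (q:ℂ) (m+1)) =
      (q:ℂ) ^ (j+1) * (qp (q:ℂ) (j + 1 + m) / (qp (q:ℂ) (j+1) * qp (q:ℂ) m)) +
      qp (q:ℂ) (j + 1 + m) / (qp (q:ℂ) j * qp (q:ℂ) (m+1)) := by
  have h1 := qp_ne_zero hq0 hq1
  rw [show j + 1 + m + 1 = (j + 1 + m) + 1 from rfl, qp_succ (q:ℂ) (j+1+m),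
    qp_succ (q:ℂ) m, qp_succ (q:ℂ) j]
  have ha := one_sub_pow_ne hq0 hq1 j
  have hb := one_sub_pow_ne hq0 hq1 m
  field_simp [h1 j, h1 m, h1 (j+1+m)]
  ring

lemma D1 {q : ℝ} (hq0 : 0 < q) (hq1 : q < 1) (n : ℕ) (z : ℂ) :
    ∑ k ∈ range (n + 2), qp (q:ℂ) (n+1) / (qp (q:ℂ) k * qp (q:ℂ) (n+1-k)) * z ^ ((n:ℤ) - 2*k)
    = (∑ k ∈ range (n + 1), qp (q:ℂ) n / (qp (q:ℂ) k * qp (q:ℂ) (n-k)) * z ^ ((n:ℤ) - 2*k))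
    + ∑ k ∈ range (n + 1), (q:ℂ)^(n-k) * (qp (q:ℂ) n / (qp (q:ℂ) k * qp (q:ℂ) (n-k))) * z ^ ((n:ℤ) - 2*k - 2) := by
  have h1 := qp_ne_zero hq0 hq1
  rw [Finset.sum_range_succ]
  have step : ∀ k ∈ range (n+1),
      qp (q:ℂ) (n+1) / (qp (q:ℂ) k * qp (q:ℂ) (n+1-k)) * z ^ ((n:ℤ) - 2*k)
      = qp (q:ℂ) n / (qp (q:ℂ) k * qp (q:ℂ) (n-k)) * z ^ ((n:ℤ) - 2*k)
        + (if k = 0 then 0 else (q:ℂ)^(n+1-k) * (qp (q:ℂ) n / (qp (q:ℂ) (k-1) * qp (q:ℂ) (n+1-k))) * z ^ ((n:ℤ) - 2*k)) := by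
    intro k hk
    rcases Nat.eq_zero_or_pos k with rfl | hkpos
    · simp [qp_zero, div_self (h1 n), div_self (h1 (n+1))]
    · obtain ⟨j, rfl⟩ : ∃ j, k = j + 1 := ⟨k - 1, (Nat.succ_pred_eq_of_pos hkpos).symm⟩
      have hkn : j + 1 ≤ n := Nat.lt_succ_iff.mp (mem_range.mp hk)
      obtain ⟨m, rfl⟩ : ∃ m, n = j + 1 + m := ⟨n - (j+1), (Nat.add_sub_cancel' hkn).symm⟩
      have e1 : j + 1 + m + 1 - (j + 1) = m + 1 := by omega
      have e2 : j + 1 + m - (j + 1) = m := by omega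
      have e3 : j + 1 - 1 = j := by omega
      rw [if_neg (Nat.succ_ne_zero j), e1, e2, e3, pascalA hq0 hq1 j m]
      ring
  rw [Finset.sum_congr rfl step, Finset.sum_add_distrib]
  have hG : (∑ k ∈ range (n+1),
      if k = 0 then (0:ℂ) else (q:ℂ)^(n+1-k) * (qp (q:ℂ) n / (qp (q:ℂ) (k-1) * qp (q:ℂ) (n+1-k))) * z ^ ((n:ℤ) - 2*k))
      = ∑ k ∈ range n, (q:ℂ)^(n-k) * (qp (q:ℂ) n / (qp (q:ℂ) k * qp (q:ℂ) (n-k))) * z ^ ((n:ℤ) - 2*k - 2) := by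
    rw [Finset.sum_range_succ']
    simp only [Nat.succ_ne_zero, if_false, if_pos rfl, add_zero, ite_false, ite_true, reduceIte]
    refine Finset.sum_congr rfl ?_
    intro k hk
    have e1 : n + 1 - (k + 1) = n - k := by omega
    have e2 : k + 1 - 1 = k := by omega
    rw [e1, e2]
    congr 1
    push_cast
    ring
  rw [hG]
  simp only [Finset.sum_range_succ]
  simp only [Nat.sub_self, qp_zero, mul_one, pow_zero, one_mul, div_self (h1 (n+1)), div_self (h1 n)]
  rw [show (n:ℤ) - 2 * ((n+1 : ℕ) : ℤ) = (n:ℤ) - 2*(n:ℤ) - 2 by push_cast; ring]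
  ring

lemma D2 {q : ℝ} (hq0 : 0 < q) (hq1 : q < 1) (n : ℕ) (z : ℂ) :
    ∑ k ∈ range (n + 2), qp (q:ℂ) (n+1) / (qp (q:ℂ) k * qp (q:ℂ) (n+1-k)) * z ^ ((n:ℤ) - 2*k + 2)
    = (∑ k ∈ range (n + 1), (q:ℂ)^k * (qp (q:ℂ) n / (qp (q:ℂ) k * qp (q:ℂ) (n-k))) * z ^ ((n:ℤ) - 2*k + 2))
    + ∑ k ∈ range (n + 1), qp (q:ℂ) n / (qp (q:ℂ) k * qp (q:ℂ) (n-k)) * z ^ ((n:ℤ) - 2*k) := by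
  have h1 := qp_ne_zero hq0 hq1
  rw [Finset.sum_range_succ]
  have step : ∀ k ∈ range (n+1),
      qp (q:ℂ) (n+1) / (qp (q:ℂ) k * qp (q:ℂ) (n+1-k)) * z ^ ((n:ℤ) - 2*k + 2)
      = (q:ℂ)^k * (qp (q:ℂ) n / (qp (q:ℂ) k * qp (q:ℂ) (n-k))) * z ^ ((n:ℤ) - 2*k + 2)
        + (if k = 0 then 0 else (qp (q:ℂ) n / (qp (q:ℂ) (k-1) * qp (q:ℂ) (n+1-k))) * z ^ ((n:ℤ) - 2*k + 2)) := by
    intro k hk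
    rcases Nat.eq_zero_or_pos k with rfl | hkpos
    · simp [qp_zero, div_self (h1 n), div_self (h1 (n+1))]
    · obtain ⟨j, rfl⟩ : ∃ j, k = j + 1 := ⟨k - 1, (Nat.succ_pred_eq_of_pos hkpos).symm⟩
      have hkn : j + 1 ≤ n := Nat.lt_succ_iff.mp (mem_range.mp hk)
      obtain ⟨m, rfl⟩ : ∃ m, n = j + 1 + m := ⟨n - (j+1), (Nat.add_sub_cancel' hkn).symm⟩
      have e1 : j + 1 + m + 1 - (j + 1) = m + 1 := by omega
      have e2 : j + 1 + m - (j + 1) = m := by omega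
      have e3 : j + 1 - 1 = j := by omega
      rw [if_neg (Nat.succ_ne_zero j), e1, e2, e3, pascalB hq0 hq1 j m]
      ring
  rw [Finset.sum_congr rfl step, Finset.sum_add_distrib]
  have hG : (∑ k ∈ range (n+1),
      if k = 0 then (0:ℂ) else (qp (q:ℂ) n / (qp (q:ℂ) (k-1) * qp (q:ℂ) (n+1-k))) * z ^ ((n:ℤ) - 2*k + 2))
      = ∑ k ∈ range n, qp (q:ℂ) n / (qp (q:ℂ) k * qp (q:ℂ) (n-k)) * z ^ ((n:ℤ) - 2*k) := by
    rw [Finset.sum_range_succ']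
    simp only [Nat.succ_ne_zero, if_false, if_pos rfl, add_zero, ite_false, ite_true, reduceIte]
    refine Finset.sum_congr rfl ?_
    intro k hk
    have e1 : n + 1 - (k + 1) = n - k := by omega
    have e2 : k + 1 - 1 = k := by omega
    rw [e1, e2]
    congr 1
    push_cast
    ring
  rw [hG]
  simp only [Finset.sum_range_succ]
  simp only [Nat.sub_self, qp_zero, mul_one, pow_zero, one_mul, div_self (h1 (n+1)), div_self (h1 n)]
  rw [show (n:ℤ) - 2 * ((n+1 : ℕ) : ℤ) + 2 = (n:ℤ) - 2*(n:ℤ) by push_cast; ring]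
  ring

/-- The raising relation `τ* Hₙ = -q^{-(n+1)/2} H_{n+1}` for the continuous
q-Hermite polynomials, where
`τ* g (z) = q^{-1/2}(z⁻² g(q^{1/2}z) - z² g(q^{-1/2}z))/(z - z⁻¹)` and `q = s²`. -/
theorem tauStar_raising_qHermite (q s : ℝ) (hq0 : 0 < q) (hq1 : q < 1) (hs : 0 < s)
    (hsq : s ^ 2 = q) (n : ℕ) (z : ℂ)
    (hz0 : z ≠ 0) (hz1 : z ≠ 1) (hz2 : z ≠ -1) :
    (s : ℂ)⁻¹ * (z ^ (-2 : ℤ) * Hq (q : ℂ) n ((s : ℂ) * z) -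
        z ^ 2 * Hq (q : ℂ) n (z / (s : ℂ))) / (z - z⁻¹) =
      -(s : ℂ) ^ (-((n : ℤ) + 1)) * Hq (q : ℂ) (n + 1) z := by
  have hS : (s : ℂ) ≠ 0 := by exact_mod_cast hs.ne'
  have hsq' : ((s:ℂ))^2 = (q:ℂ) := by exact_mod_cast congrArg (Complex.ofReal) hsq
  have h1 := qp_ne_zero hq0 hq1
  have hzz : z - z⁻¹ ≠ 0 := by
    have h : (z - z⁻¹) * z = (z - 1) * (z + 1) := by field_simp; ring
    intro h0
    rw [h0, zero_mul] at h
    rcases mul_eq_zero.mp h.symm with hx | hx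
    · exact hz1 (sub_eq_zero.mp hx)
    · exact hz2 (eq_neg_of_add_eq_zero_left hx)
  -- the two halves of the left side
  have L1 : (s:ℂ)^(n:ℤ) * (z ^ (-2:ℤ) * Hq (q:ℂ) n ((s:ℂ)*z))
      = ∑ k ∈ range (n + 1), (q:ℂ)^(n-k) * (qp (q:ℂ) n / (qp (q:ℂ) k * qp (q:ℂ) (n-k))) * z ^ ((n:ℤ) - 2*k - 2) := by
    unfold Hq
    rw [Finset.mul_sum, Finset.mul_sum]
    refine Finset.sum_congr rfl ?_
    intro k hk
    have hkn : k ≤ n := Nat.lt_succ_iff.mp (mem_range.mp hk)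
    rw [mul_zpow]
    have e1 : (s:ℂ)^(n:ℤ) * (s:ℂ)^((n:ℤ) - 2*k) = (q:ℂ)^(n-k) := by
      rw [← zpow_add₀ hS, show (n:ℤ) + ((n:ℤ) - 2*k) = 2*((n:ℤ) - (k:ℤ)) by ring,
        zpow_mul, show ((s:ℂ))^(2:ℤ) = (q:ℂ) by rw [← hsq']; norm_cast,
        show (n:ℤ) - (k:ℤ) = ((n - k : ℕ) : ℤ) by rw [Nat.cast_sub hkn], zpow_natCast]
    have e2 : z ^ (-2:ℤ) * z ^ ((n:ℤ) - 2*k) = z ^ ((n:ℤ) - 2*k - 2) := by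
      rw [← zpow_add₀ hz0]; congr 1; ring
    calc (s:ℂ)^(n:ℤ) * (z ^ (-2:ℤ) * (qp (q:ℂ) n / (qp (q:ℂ) k * qp (q:ℂ) (n-k)) *
          ((s:ℂ)^((n:ℤ) - 2*k) * z ^ ((n:ℤ) - 2*k))))
        = ((s:ℂ)^(n:ℤ) * (s:ℂ)^((n:ℤ) - 2*k)) * (qp (q:ℂ) n / (qp (q:ℂ) k * qp (q:ℂ) (n-k))) *
          (z ^ (-2:ℤ) * z ^ ((n:ℤ) - 2*k)) := by ring
      _ = _ := by rw [e1, e2]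
  have L2 : (s:ℂ)^(n:ℤ) * (z ^ (2:ℕ) * Hq (q:ℂ) n (z / (s:ℂ)))
      = ∑ k ∈ range (n + 1), (q:ℂ)^k * (qp (q:ℂ) n / (qp (q:ℂ) k * qp (q:ℂ) (n-k))) * z ^ ((n:ℤ) - 2*k + 2) := by
    unfold Hq
    rw [Finset.mul_sum, Finset.mul_sum]
    refine Finset.sum_congr rfl ?_
    intro k hk
    rw [div_zpow, div_eq_mul_inv (z ^ ((n:ℤ) - 2*(k:ℤ))) ((s:ℂ) ^ ((n:ℤ) - 2*(k:ℤ))), ← zpow_neg]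
    have e1 : (s:ℂ)^(n:ℤ) * (s:ℂ)^(-((n:ℤ) - 2*k)) = (q:ℂ)^k := by
      rw [← zpow_add₀ hS, show (n:ℤ) + -((n:ℤ) - 2*k) = 2*(k:ℤ) by ring,
        zpow_mul, show ((s:ℂ))^(2:ℤ) = (q:ℂ) by rw [← hsq']; norm_cast, zpow_natCast]
    have e2 : (z:ℂ) ^ (2:ℕ) * z ^ ((n:ℤ) - 2*k) = z ^ ((n:ℤ) - 2*k + 2) := by
      rw [show (z:ℂ) ^ (2:ℕ) = z ^ (2:ℤ) by norm_cast, ← zpow_add₀ hz0]; congr 1; ring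
    calc (s:ℂ)^(n:ℤ) * (z ^ (2:ℕ) * (qp (q:ℂ) n / (qp (q:ℂ) k * qp (q:ℂ) (n-k)) *
          (z ^ ((n:ℤ) - 2*k) * (s:ℂ)^(-((n:ℤ) - 2*k)))))
        = ((s:ℂ)^(n:ℤ) * (s:ℂ)^(-((n:ℤ) - 2*k))) * (qp (q:ℂ) n / (qp (q:ℂ) k * qp (q:ℂ) (n-k))) *
          (z ^ (2:ℕ) * z ^ ((n:ℤ) - 2*k)) := by ring
      _ = _ := by rw [e1, e2]
  have R : (z⁻¹ - z) * Hq (q:ℂ) (n+1) z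
      = (∑ k ∈ range (n + 2), qp (q:ℂ) (n+1) / (qp (q:ℂ) k * qp (q:ℂ) (n+1-k)) * z ^ ((n:ℤ) - 2*k))
        - ∑ k ∈ range (n + 2), qp (q:ℂ) (n+1) / (qp (q:ℂ) k * qp (q:ℂ) (n+1-k)) * z ^ ((n:ℤ) - 2*k + 2) := by
    unfold Hq
    rw [sub_mul, Finset.mul_sum, Finset.mul_sum]
    congr 1
    · refine Finset.sum_congr rfl ?_
      intro k hk
      have e2 : z⁻¹ * z ^ (((n+1:ℕ):ℤ) - 2*k) = z ^ ((n:ℤ) - 2*k) := by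
        rw [mul_comm, ← zpow_sub_one₀ hz0]
        congr 1; push_cast; ring
      calc z⁻¹ * (qp (q:ℂ) (n+1) / (qp (q:ℂ) k * qp (q:ℂ) (n+1-k)) * z ^ (((n+1:ℕ):ℤ) - 2*k))
          = (qp (q:ℂ) (n+1) / (qp (q:ℂ) k * qp (q:ℂ) (n+1-k))) * (z⁻¹ * z ^ (((n+1:ℕ):ℤ) - 2*k)) := by ring
        _ = _ := by rw [e2]
    · refine Finset.sum_congr rfl ?_
      intro k hk
      have e2 : z * z ^ (((n+1:ℕ):ℤ) - 2*k) = z ^ ((n:ℤ) - 2*k + 2) := by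
        rw [mul_comm, ← zpow_add_one₀ hz0]
        congr 1; push_cast; ring
      calc z * (qp (q:ℂ) (n+1) / (qp (q:ℂ) k * qp (q:ℂ) (n+1-k)) * z ^ (((n+1:ℕ):ℤ) - 2*k))
          = (qp (q:ℂ) (n+1) / (qp (q:ℂ) k * qp (q:ℂ) (n+1-k))) * (z * z ^ (((n+1:ℕ):ℤ) - 2*k)) := by ring
        _ = _ := by rw [e2]
  have M : (s:ℂ)^(n:ℤ) * (z ^ (-2:ℤ) * Hq (q:ℂ) n ((s:ℂ)*z) - z ^ 2 * Hq (q:ℂ) n (z / (s:ℂ)))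
      = (z⁻¹ - z) * Hq (q:ℂ) (n+1) z := by
    rw [mul_sub, L1, L2, R, D1 hq0 hq1 n z, D2 hq0 hq1 n z]
    ring
  have M2 : z ^ (-2:ℤ) * Hq (q:ℂ) n ((s:ℂ)*z) - z ^ 2 * Hq (q:ℂ) n (z / (s:ℂ))
      = (s:ℂ)^(-(n:ℤ)) * ((z⁻¹ - z) * Hq (q:ℂ) (n+1) z) := by
    rw [← M, ← mul_assoc, ← zpow_add₀ hS]
    norm_num
  rw [M2, div_eq_iff hzz, zpow_neg, zpow_neg, zpow_natCast,
    show (n:ℤ) + 1 = ((n+1:ℕ):ℤ) by push_cast; ring, zpow_natCast]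
  field_simp
  ring
end

section
/- The operators \tau and \tau^* acting on Laurent polynomials in z symmetric under z \mapsto z^{-1} satisfy the q-Heisenberg relation \tau^* \tau - q \tau \tau^* = -(1-q) as operators. -/
set_option maxHeartbeats 1000000


/-- The divided difference operator `τ`, with `q = s²`:
`(τ g)(z) = (g(q^{1/2}z) - g(q^{-1/2}z))/(z - z⁻¹)`. -/
noncomputable def tauOp (s : ℂ) (g : ℂ → ℂ) (z : ℂ) : ℂ :=
  (g (s * z) - g (z / s)) / (z - z⁻¹)

/-- The operator `τ*`, with `q = s²`:
`(τ* g)(z) = q^{-1/2}(z⁻² g(q^{1/2}z) - z² g(q^{-1/2}z))/(z - z⁻¹)`. -/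
noncomputable def tauStarOp (s : ℂ) (g : ℂ → ℂ) (z : ℂ) : ℂ :=
  s⁻¹ * (z ^ (-2 : ℤ) * g (s * z) - z ^ 2 * g (z / s)) / (z - z⁻¹)

lemma sq_sub_one_ne_zero (w : ℂ) (h1 : w ≠ 1) (h2 : w ≠ -1) : w ^ 2 - 1 ≠ 0 := by
  intro h
  have hw : (w - 1) * (w + 1) = 0 := by linear_combination h
  rcases mul_eq_zero.mp hw with h' | h'
  · exact h1 (by linear_combination h')
  · exact h2 (by linear_combination h')

lemma sub_inv_eq (w : ℂ) (h0 : w ≠ 0) : w - w⁻¹ = (w ^ 2 - 1) / w := by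
  field_simp

/-- The q-Heisenberg relation `τ* τ - q τ τ* = -(1-q)` on functions of
`x = (z + z⁻¹)/2`, i.e. functions symmetric under `z ↦ z⁻¹`. -/
theorem qHeisenberg_relation (q s : ℝ) (hq0 : 0 < q) (hq1 : q < 1) (hs : 0 < s)
    (hsq : s ^ 2 = q) (g : ℂ → ℂ) (hg : ∀ w : ℂ, w ≠ 0 → g w = g w⁻¹)
    (z : ℂ) (hz0 : z ≠ 0) (hz1 : z ≠ 1) (hz2 : z ≠ -1)
    (hsz1 : (s : ℂ) * z ≠ 1) (hsz2 : (s : ℂ) * z ≠ -1)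
    (hzs1 : z / (s : ℂ) ≠ 1) (hzs2 : z / (s : ℂ) ≠ -1) :
    tauStarOp (s : ℂ) (tauOp (s : ℂ) g) z - (q : ℂ) * tauOp (s : ℂ) (tauStarOp (s : ℂ) g) z =
      -(1 - (q : ℂ)) * g z := by
  have hs0 : (s : ℂ) ≠ 0 := by exact_mod_cast hs.ne'
  have hq : (q : ℂ) = (s:ℂ)^2 := by exact_mod_cast hsq.symm
  have hsz0 : (s : ℂ) * z ≠ 0 := mul_ne_zero hs0 hz0
  have hzs0 : z / (s : ℂ) ≠ 0 := div_ne_zero hz0 hs0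
  have p1 : z ^ 2 - 1 ≠ 0 := sq_sub_one_ne_zero z hz1 hz2
  have p2' : ((s:ℂ) * z) ^ 2 - 1 ≠ 0 := sq_sub_one_ne_zero _ hsz1 hsz2
  have p3' : (z / (s:ℂ)) ^ 2 - 1 ≠ 0 := sq_sub_one_ne_zero _ hzs1 hzs2
  have p2 : (s:ℂ) ^ 2 * z ^ 2 - 1 ≠ 0 := fun h => p2' (by linear_combination h)
  have p3 : z ^ 2 - (s:ℂ) ^ 2 ≠ 0 := fun h => p3' (by
    field_simp
    linear_combination h)
  have e1 : (s:ℂ) * z / (s:ℂ) = z := by field_simp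
  have e2 : (s:ℂ) * (z / (s:ℂ)) = z := by field_simp
  obtain ⟨d1, hd1e, hd1n⟩ : ∃ d : ℂ, z ^ 2 - 1 = d ∧ d ≠ 0 := ⟨_, rfl, p1⟩
  obtain ⟨d2, hd2e, hd2n⟩ : ∃ d : ℂ, (s:ℂ) ^ 2 * z ^ 2 - 1 = d ∧ d ≠ 0 := ⟨_, rfl, p2⟩
  obtain ⟨d3, hd3e, hd3n⟩ : ∃ d : ℂ, z ^ 2 - (s:ℂ) ^ 2 = d ∧ d ≠ 0 := ⟨_, rfl, p3⟩
  set A := g ((s:ℂ) * ((s:ℂ) * z)) with hA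
  set C := g (z / (s:ℂ) / (s:ℂ)) with hC
  set B := g z with hB
  have h1 : tauOp (s:ℂ) g ((s:ℂ) * z) = (A - B) * ((s:ℂ) * z) / d2 := by
    rw [tauOp, e1, sub_inv_eq _ hsz0, ← hA, ← hB, div_div_eq_mul_div,
      div_eq_div_iff p2' hd2n, ← hd2e]
    ring
  have h2 : tauOp (s:ℂ) g (z / (s:ℂ)) = (B - C) * ((s:ℂ) * z) / d3 := by
    rw [tauOp, e2, sub_inv_eq _ hzs0, ← hB, ← hC, div_div_eq_mul_div,
      div_eq_div_iff p3' hd3n, ← hd3e]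
    field_simp
  have h3 : tauStarOp (s:ℂ) g ((s:ℂ) * z) =
      (A - (s:ℂ)^4 * z^4 * B) / ((s:ℂ)^2 * z * d2) := by
    rw [tauStarOp, e1, sub_inv_eq _ hsz0, ← hA, ← hB, zpow_neg, zpow_two,
      div_div_eq_mul_div,
      div_eq_div_iff p2' (mul_ne_zero (mul_ne_zero (pow_ne_zero 2 hs0) hz0) hd2n), ← hd2e]
    field_simp
  have h4 : tauStarOp (s:ℂ) g (z / (s:ℂ)) =
      ((s:ℂ)^4 * B - z^4 * C) / ((s:ℂ)^2 * z * d3) := by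
    rw [tauStarOp, e2, sub_inv_eq _ hzs0, ← hB, ← hC, zpow_neg, zpow_two,
      div_div_eq_mul_div,
      div_eq_div_iff p3' (mul_ne_zero (mul_ne_zero (pow_ne_zero 2 hs0) hz0) hd3n)]
    field_simp
    have e : (s:ℂ)⁻¹ ^ 4 * z⁻¹ ^ 2 * ((s:ℂ) ^ 4 * z ^ 2) = 1 := by field_simp
    linear_combination (z ^ 4 * C - (s:ℂ) ^ 4 * B) * hd3e
  have hL : tauStarOp (s:ℂ) (tauOp (s:ℂ) g) z = (s:ℂ)⁻¹ *
      (z ^ (-2:ℤ) * tauOp (s:ℂ) g ((s:ℂ) * z) - z ^ 2 * tauOp (s:ℂ) g (z / (s:ℂ))) /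
      (z - z⁻¹) := rfl
  have hR : tauOp (s:ℂ) (tauStarOp (s:ℂ) g) z =
      (tauStarOp (s:ℂ) g ((s:ℂ) * z) - tauStarOp (s:ℂ) g (z / (s:ℂ))) / (z - z⁻¹) := rfl
  rw [hL, hR, h1, h2, h3, h4, hq, sub_inv_eq _ hz0, hd1e, zpow_neg, zpow_two]
  rw [div_div_eq_mul_div, div_div_eq_mul_div]
  field_simp
  have n1 : (s:ℂ) * (z * z * d2 * d3) * d1 ≠ 0 :=
    mul_ne_zero (mul_ne_zero hs0 (mul_ne_zero (mul_ne_zero (mul_ne_zero hz0 hz0) hd2n) hd3n)) hd1n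
  have n2 : (s:ℂ) ^ 2 * z * d2 * ((s:ℂ) ^ 2 * z * d3) * d1 ≠ 0 :=
    mul_ne_zero (mul_ne_zero (mul_ne_zero (mul_ne_zero (pow_ne_zero 2 hs0) hz0) hd2n)
      (mul_ne_zero (mul_ne_zero (pow_ne_zero 2 hs0) hz0) hd3n)) hd1n
  rw [← hd1e, ← hd2e, ← hd3e]
  ring
end
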